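/- arXiv:2510.02372 — 2 statements merged into one kernel-verified Lean document; each statement's English description precedes it below -/
import Mathlib

section
/- Let ζ_{ij}^β ∈ ℝ (i,j ∈ {1,…,r}, β ∈ {1,…,n}) be symmetric in i,j, and set T^β = ∑_{i=1}^r ζ_{ii}^β and ‖ζ‖² = ∑_{β} ∑_{i,j} (ζ_{ij}^β)². Then ‖ζ‖² = (1/2) ∑_β (T^β)² + (1/2) ∑_β (ζ_{11}^β − ζ_{22}^β − ⋯ − ζ_{rr}^β)² + 2 ∑_β ∑_{i=2}^r (ζ_{1i}^β)² − 2 ∑_β ∑_{2≤i<j≤r} ( ζ_{ii}^β ζ_{jj}^β − (ζ_{ij}^β)² ). -/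
/-!
Split off the index `0`: for symmetric `A`, `∑ᵢⱼ Aᵢⱼ² = A₀₀² + 2 ∑_{i>0} A₀ᵢ² + ∑_{i,j>0} Aᵢⱼ²`.
On the remaining block `B`, expanding `(tr B)²` gives
`∑ᵢⱼ Bᵢⱼ² = (tr B)² - 2 ∑_{i<j} (Bᵢᵢ Bⱼⱼ - Bᵢⱼ²)`, and the two squares of the statement recombine
through `½ (a + S)² + ½ (a - S)² = a² + S²` with `a = A₀₀`, `S = tr B`.
-/

open Finset

section LinearOrder

variable {ι : Type*} [Fintype ι] [LinearOrder ι]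

theorem sum_sum_eq_sum_diag_add_two_nsmul_sum_lt {M : Type*} [AddCommMonoid M]
    (f : ι → ι → M) (hf : ∀ i j, f i j = f j i) :
    ∑ i, ∑ j, f i j = ∑ i, f i i + 2 • ∑ i, ∑ j, if i < j then f i j else 0 := by
  have hsplit : ∀ i j, f i j = ((if i < j then f i j else 0) + if j < i then f j i else 0)
      + if i = j then f i j else 0 := by
    intro i j
    rcases lt_trichotomy i j with h | rfl | h
    · simp [h, h.ne, h.not_gt]
    · simp
    · simp [h, h.ne', h.not_gt, hf i j]
  simp_rw [sum_congr rfl fun i _ => sum_congr rfl fun j _ => hsplit i j, sum_add_distrib,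
    sum_ite_eq, mem_univ, if_true]
  rw [sum_comm (f := fun i j => if j < i then f j i else 0), two_nsmul]
  abel

theorem sq_sum_eq_sum_sq_add_two_mul_sum_lt {R : Type*} [CommSemiring R] (g : ι → R) :
    (∑ i, g i) ^ 2 = ∑ i, g i ^ 2 + 2 * ∑ i, ∑ j, if i < j then g i * g j else 0 := by
  rw [sq, sum_mul_sum, sum_sum_eq_sum_diag_add_two_nsmul_sum_lt _ fun i j => mul_comm (g i) (g j),
    nsmul_eq_mul, Nat.cast_ofNat]
  simp only [sq]

theorem sum_sum_sq_eq_sq_sum_diag_sub_two_mul_sum_minors {R : Type*} [CommRing R]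
    (A : ι → ι → R) (hA : ∀ i j, A i j = A j i) :
    ∑ i, ∑ j, A i j ^ 2
      = (∑ i, A i i) ^ 2 - 2 * ∑ i, ∑ j, if i < j then A i i * A j j - A i j ^ 2 else 0 := by
  have hminors : (∑ i, ∑ j, if i < j then A i i * A j j - A i j ^ 2 else 0)
      = (∑ i, ∑ j, if i < j then A i i * A j j else 0)
        - ∑ i, ∑ j, if i < j then A i j ^ 2 else 0 := by
    simp only [← sum_sub_distrib, ite_sub_ite, sub_zero]
  rw [sum_sum_eq_sum_diag_add_two_nsmul_sum_lt _ fun i j => by rw [hA], hminors,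
    sq_sum_eq_sum_sq_add_two_mul_sum_lt, nsmul_eq_mul, Nat.cast_ofNat]
  ring

end LinearOrder

section FinSucc

variable {m : ℕ}

theorem Fin.sum_sum_succ_of_symm {R : Type*} [CommSemiring R]
    (A : Fin (m + 1) → Fin (m + 1) → R) (hA : ∀ i j, A i j = A j i) :
    ∑ i, ∑ j, A i j
      = A 0 0 + 2 * ∑ i : Fin m, A 0 i.succ + ∑ i : Fin m, ∑ j : Fin m, A i.succ j.succ := by
  simp only [Fin.sum_univ_succ, sum_add_distrib, hA _ 0]
  ring

theorem Fin.sum_ite_zero_lt {M : Type*} [AddCommMonoid M] (f : Fin (m + 1) → M) :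
    ∑ i, (if 0 < i then f i else 0) = ∑ i : Fin m, f i.succ := by
  simp [Fin.sum_univ_succ, Fin.succ_pos]

theorem Fin.sum_sum_ite_zero_lt_and_lt {M : Type*} [AddCommMonoid M]
    (f : Fin (m + 1) → Fin (m + 1) → M) :
    ∑ i, ∑ j, (if 0 < i ∧ i < j then f i j else 0)
      = ∑ i : Fin m, ∑ j : Fin m, if i < j then f i.succ j.succ else 0 := by
  simp [ite_and, Fin.sum_univ_succ]

end FinSucc

theorem sum_sum_sq_decomposition_of_symm {K : Type*} [Field K] [CharZero K] {m : ℕ}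
    (A : Fin (m + 1) → Fin (m + 1) → K) (hA : ∀ i j, A i j = A j i) :
    ∑ i, ∑ j, A i j ^ 2
      = 1 / 2 * (∑ i, A i i) ^ 2 + 1 / 2 * (A 0 0 - ∑ i : Fin m, A i.succ i.succ) ^ 2
        + 2 * ∑ i : Fin m, A 0 i.succ ^ 2
        - 2 * ∑ i : Fin m, ∑ j : Fin m,
            if i < j then A i.succ i.succ * A j.succ j.succ - A i.succ j.succ ^ 2 else 0 := by
  rw [Fin.sum_sum_succ_of_symm _ fun i j => by rw [hA], Fin.sum_univ_succ (f := fun i => A i i)]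
  linear_combination sum_sum_sq_eq_sq_sum_diag_sub_two_mul_sum_minors
    (fun i j : Fin m => A i.succ j.succ) fun i j => hA _ _

/-- Lemma 1 (equation (3.6)) of the paper, algebraic form: decomposition of
the squared Frobenius norm of a symmetric family `ζ`.  Index `0` plays the
role of the index `1` of the paper. -/
theorem stmt4 (r n : ℕ) (hr : 0 < r) (ζ : Fin n → Fin r → Fin r → ℝ)
    (hsym : ∀ β i j, ζ β i j = ζ β j i) :
    (∑ β : Fin n, ∑ i : Fin r, ∑ j : Fin r, (ζ β i j) ^ 2)
    = (1 / 2) * (∑ β : Fin n, (∑ i : Fin r, ζ β i i) ^ 2)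
      + (1 / 2) * (∑ β : Fin n,
          (ζ β ⟨0, hr⟩ ⟨0, hr⟩
            - ∑ i : Fin r, if (⟨0, hr⟩ : Fin r) < i then ζ β i i else 0) ^ 2)
      + 2 * (∑ β : Fin n, ∑ i : Fin r,
          if (⟨0, hr⟩ : Fin r) < i then (ζ β ⟨0, hr⟩ i) ^ 2 else 0)
      - 2 * (∑ β : Fin n, ∑ i : Fin r, ∑ j : Fin r,
          if (⟨0, hr⟩ : Fin r) < i ∧ i < j then
            ζ β i i * ζ β j j - (ζ β i j) ^ 2 else 0) := by
  obtain ⟨m, rfl⟩ : ∃ m, r = m + 1 := ⟨r - 1, by omega⟩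
  -- `rw`, not `simp`: the instances `Decidable (⟨0, hr⟩ < i)` mention `⟨0, hr⟩` as well.
  rw [Fin.zero_eta]
  simp only [Fin.sum_ite_zero_lt, Fin.sum_sum_ite_zero_lt_and_lt]
  rw [sum_congr rfl fun β _ => sum_sum_sq_decomposition_of_symm (ζ β) (hsym β)]
  simp only [sum_add_distrib, sum_sub_distrib, mul_sum]
end

section
/- For two symmetric real r×r matrices A, B, the DDVV inequality in the case n = 2 reads: ∑_{i<j} ((A_{ii}−A_{jj})² + (B_{ii}−B_{jj})²) + 2r ∑_{i<j} (A_{ij}² + B_{ij}²) ≥ 2r ( ∑_{i<j} (∑_k (A_{jk}B_{ik} − A_{ik}B_{jk}))² )^{1/2} = r√2 · ‖[A,B]‖_F. -/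
open Finset Matrix

variable {r : ℕ}

lemma split3 (F : Fin r → Fin r → ℝ) :
    ∑ i, ∑ j, F i j = (∑ i, F i i)
      + (∑ i, ∑ j, if i < j then F i j else 0)
      + (∑ i, ∑ j, if j < i then F i j else 0) := by
  have key : ∀ i j : Fin r, F i j =
      (if i = j then F i j else 0) + (if i < j then F i j else 0)
        + (if j < i then F i j else 0) := by
    intro i j
    rcases lt_trichotomy i j with h | h | h
    · simp [h, h.ne, h.ne', not_lt_of_gt h]
    · simp [h, lt_irrefl]
    · simp [h, h.ne, h.ne', not_lt_of_gt h]
  calc ∑ i, ∑ j, F i j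
      = ∑ i, ∑ j, ((if i = j then F i j else 0) + (if i < j then F i j else 0)
          + (if j < i then F i j else 0)) :=
        Finset.sum_congr rfl fun i _ => Finset.sum_congr rfl fun j _ => key i j
    _ = _ := by
        simp only [Finset.sum_add_distrib, Finset.sum_ite_eq, Finset.mem_univ, if_true]

lemma swap_lt (F : Fin r → Fin r → ℝ) :
    (∑ i, ∑ j, if j < i then F i j else 0) = ∑ i, ∑ j, if i < j then F j i else 0 := by
  rw [Finset.sum_comm]

lemma offdiag_double (F : Fin r → Fin r → ℝ) (hsymm : ∀ i j, F i j = F j i)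
    (hdiag : ∀ i, F i i = 0) :
    ∑ i, ∑ j, F i j = 2 * ∑ i, ∑ j, (if i < j then F i j else 0) := by
  rw [split3, swap_lt]
  simp only [hdiag, Finset.sum_const_zero, zero_add]
  have : (∑ i, ∑ j, if i < j then F j i else 0) = ∑ i, ∑ j, if i < j then F i j else 0 := by
    apply Finset.sum_congr rfl; intro i _; apply Finset.sum_congr rfl; intro j _
    rw [hsymm]
  rw [this]; ring

lemma sum_pairs_sq (x : Fin r → ℝ) :
    (∑ i, ∑ j, if i < j then (x i - x j)^2 else 0)
      = r * ∑ i, (x i)^2 - (∑ i, x i)^2 := by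
  have h := offdiag_double (fun i j => (x i - x j)^2)
    (fun i j => by ring) (fun i => by ring)
  have h2 : ∑ i, ∑ j, (x i - x j)^2 = r * ∑ i, (x i)^2 - (∑ i, x i)^2
      + (r * ∑ i, (x i)^2 - (∑ i, x i)^2) := by
    simp only [sub_sq, Finset.sum_add_distrib, Finset.sum_sub_distrib,
      Finset.sum_const, Finset.card_univ, Fintype.card_fin, nsmul_eq_mul,
      ← Finset.mul_sum, ← Finset.sum_mul]
    ring
  rw [h2] at h
  beta_reduce at h
  linarith


lemma frob_eq_trace (M : Matrix (Fin r) (Fin r) ℝ) :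
    ∑ i, ∑ j, (M i j)^2 = Matrix.trace (star M * M) := by
  simp only [Matrix.trace, Matrix.diag, Matrix.mul_apply, Matrix.star_eq_conjTranspose,
    Matrix.conjTranspose_apply, star_trivial, sq]
  rw [Finset.sum_comm]

lemma frob_conj (U M : Matrix (Fin r) (Fin r) ℝ)
    (hU1 : star U * U = 1) :
    Matrix.trace (star (U * M * star U) * (U * M * star U)) = Matrix.trace (star M * M) := by
  have hU1' : ∀ X : Matrix (Fin r) (Fin r) ℝ, star U * (U * X) = X := fun X => by
    rw [← mul_assoc, hU1, one_mul]
  have key : star (U * M * star U) * (U * M * star U) = U * (star M * M) * star U := by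
    simp only [Matrix.star_mul, star_star, mul_assoc, hU1']
  rw [key, Matrix.trace_mul_cycle, hU1, one_mul]

lemma core_diag (d : Fin r → ℝ) (M : Fin r → Fin r → ℝ) :
    ∑ i, ∑ j, (d i * M i j - M i j * d j)^2
      ≤ 2 * (∑ i, (d i)^2) * (∑ i, ∑ j, (M i j)^2) := by
  have hd : ∀ i j : Fin r, (d i - d j)^2 ≤ 2 * ∑ k, (d k)^2 := by
    intro i j
    by_cases h : i = j
    · subst h
      have h0 : (0:ℝ) ≤ 2 * ∑ k, (d k)^2 := by positivity
      simpa using h0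
    · have hsub : (d i)^2 + (d j)^2 ≤ ∑ k, (d k)^2 := by
        rw [show (d i)^2 + (d j)^2 = ∑ k ∈ ({i, j} : Finset (Fin r)), (d k)^2 from by
          rw [Finset.sum_pair h]]
        exact Finset.sum_le_sum_of_subset_of_nonneg (Finset.subset_univ _)
          (fun k _ _ => sq_nonneg _)
      nlinarith [sq_nonneg (d i + d j)]
  calc ∑ i, ∑ j, (d i * M i j - M i j * d j)^2
      ≤ ∑ i, ∑ j, (2 * ∑ k, (d k)^2) * (M i j)^2 := by
        apply Finset.sum_le_sum; intro i _
        apply Finset.sum_le_sum; intro j _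
        have : (d i * M i j - M i j * d j)^2 = (d i - d j)^2 * (M i j)^2 := by ring
        rw [this]
        exact mul_le_mul_of_nonneg_right (hd i j) (sq_nonneg _)
    _ = 2 * (∑ i, (d i)^2) * (∑ i, ∑ j, (M i j)^2) := by
        simp only [← Finset.mul_sum]

lemma bw (A B : Matrix (Fin r) (Fin r) ℝ) (hA : A.IsSymm) :
    ∑ i, ∑ j, ((A * B - B * A) i j)^2
      ≤ 2 * (∑ i, ∑ j, (A i j)^2) * (∑ i, ∑ j, (B i j)^2) := by
  have hAh : A.IsHermitian := hA
  set V : Matrix (Fin r) (Fin r) ℝ := (hAh.eigenvectorUnitary : Matrix (Fin r) (Fin r) ℝ) with hV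
  have hU1 : star V * V = 1 := Unitary.coe_star_mul_self _
  have hU2 : V * star V = 1 := Unitary.coe_mul_star_self _
  have hU1' : ∀ X : Matrix (Fin r) (Fin r) ℝ, star V * (V * X) = X := fun X => by
    rw [← mul_assoc, hU1, one_mul]
  have hU2' : ∀ X : Matrix (Fin r) (Fin r) ℝ, V * (star V * X) = X := fun X => by
    rw [← mul_assoc, hU2, one_mul]
  set D : Matrix (Fin r) (Fin r) ℝ := Matrix.diagonal (RCLike.ofReal ∘ hAh.eigenvalues) with hD
  have hAeq : A = V * D * star V := hAh.spectral_theorem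
  set N : Matrix (Fin r) (Fin r) ℝ := star V * B * V with hN
  have hBeq : B = V * N * star V := by
    rw [hN]
    calc B = (V * star V) * B * (V * star V) := by rw [hU2, one_mul, mul_one]
    _ = V * (star V * B * V) * star V := by noncomm_ring
  have hC : A * B - B * A = V * (D * N - N * D) * star V := by
    rw [hAeq, hBeq]
    simp only [Matrix.mul_sub, Matrix.sub_mul, mul_assoc, hU1', hU2']
  have e1 : ∑ i, ∑ j, ((A * B - B * A) i j)^2 = ∑ i, ∑ j, ((D * N - N * D) i j)^2 := by
    rw [frob_eq_trace, frob_eq_trace, hC, frob_conj _ _ hU1]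
  have e2 : ∑ i, ∑ j, (A i j)^2 = ∑ i, (hAh.eigenvalues i)^2 := by
    have h1 : ∑ i, ∑ j, (A i j)^2 = ∑ i, ∑ j, (D i j)^2 := by
      rw [frob_eq_trace, frob_eq_trace]
      conv_lhs => rw [hAeq]
      rw [frob_conj _ _ hU1]
    rw [h1]
    simp [hD, Matrix.diagonal_apply, apply_ite (· ^ 2), Finset.sum_ite_eq]
  have e3 : ∑ i, ∑ j, (B i j)^2 = ∑ i, ∑ j, (N i j)^2 := by
    rw [frob_eq_trace, frob_eq_trace]
    conv_lhs => rw [hBeq]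
    rw [frob_conj _ _ hU1]
  rw [e1, e2, e3]
  have entry : ∀ i j, (D * N - N * D) i j
      = hAh.eigenvalues i * N i j - N i j * hAh.eigenvalues j := by
    intro i j
    simp [hD, Matrix.sub_apply, Matrix.diagonal_mul, Matrix.mul_diagonal]
  calc ∑ i, ∑ j, ((D * N - N * D) i j)^2
      = ∑ i, ∑ j, (hAh.eigenvalues i * N i j - N i j * hAh.eigenvalues j)^2 := by
        exact Finset.sum_congr rfl fun i _ => Finset.sum_congr rfl fun j _ => by rw [entry]
    _ ≤ _ := core_diag _ _


lemma Qsum (hr : 0 < r) (A : Matrix (Fin r) (Fin r) ℝ) (hA : A.IsSymm) :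
    (r:ℝ) * ∑ i, ∑ j, ((A - ((∑ i, A i i)/(r:ℝ)) • (1:Matrix (Fin r) (Fin r) ℝ)) i j)^2
      = (∑ i, ∑ j, if i < j then (A i i - A j j)^2 else 0)
        + 2 * (r:ℝ) * (∑ i, ∑ j, if i < j then (A i j)^2 else 0) := by
  set T : ℝ := (∑ i, A i i)/(r:ℝ) with hT
  set A0 : Matrix (Fin r) (Fin r) ℝ := A - T • 1 with hA0
  have hdiag : ∀ i, A0 i i = A i i - T := by
    intro i; simp [hA0, Matrix.sub_apply, Matrix.smul_apply, Matrix.one_apply]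
  have hoff : ∀ i j, i ≠ j → A0 i j = A i j := by
    intro i j hij; simp [hA0, Matrix.sub_apply, Matrix.smul_apply, Matrix.one_apply_ne hij]
  have hsplit : ∑ i, ∑ j, (A0 i j)^2
      = (∑ i, (A i i - T)^2) + 2 * ∑ i, ∑ j, (if i < j then (A i j)^2 else 0) := by
    rw [split3 (fun i j => (A0 i j)^2)]
    have e1 : (∑ i, ∑ j, if i < j then (A0 i j)^2 else 0)
        = ∑ i, ∑ j, if i < j then (A i j)^2 else 0 := by
      apply Finset.sum_congr rfl; intro i _; apply Finset.sum_congr rfl; intro j _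
      split_ifs with h
      · rw [hoff i j h.ne]
      · rfl
    have e2 : (∑ i, ∑ j, if j < i then (A0 i j)^2 else 0)
        = ∑ i, ∑ j, if i < j then (A i j)^2 else 0 := by
      rw [swap_lt (fun i j => (A0 i j)^2)]
      apply Finset.sum_congr rfl; intro i _; apply Finset.sum_congr rfl; intro j _
      split_ifs with h
      · rw [hoff j i h.ne', hA.apply]
      · rfl
    simp only [hdiag, e1, e2]; ring
  have hr' : (r:ℝ) ≠ 0 := Nat.cast_ne_zero.mpr hr.ne'
  have hexp : (r:ℝ) * ∑ i, (A i i - T)^2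
      = (r:ℝ) * ∑ i, (A i i)^2 - (∑ i, A i i)^2 := by
    have : ∑ i, (A i i - T)^2
        = ∑ i, (A i i)^2 - 2*T*(∑ i, A i i) + (r:ℝ)*T^2 := by
      simp only [sub_sq, Finset.sum_add_distrib, Finset.sum_sub_distrib,
        Finset.sum_const, Finset.card_univ, Fintype.card_fin, nsmul_eq_mul,
        ← Finset.mul_sum, ← Finset.sum_mul]
      ring
    rw [this, hT]
    field_simp
    ring
  rw [hsplit, sum_pairs_sq (fun i => A i i)] at *
  rw [mul_add]
  rw [hexp]
  ring


/-- Lu's DDVV inequality for `n = 2` symmetric matrices `A`, `B`: the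
left-hand side dominates `2r` times the square root of the commutator term,
which equals `r√2` times the Frobenius norm of `[A,B]`. -/
theorem stmt15 (r : ℕ) (hr : 2 ≤ r) (A B : Matrix (Fin r) (Fin r) ℝ)
    (hA : A.IsSymm) (hB : B.IsSymm) :
    ((∑ i : Fin r, ∑ j : Fin r, if i < j then
        (A i i - A j j) ^ 2 + (B i i - B j j) ^ 2 else 0)
      + 2 * (r : ℝ) * (∑ i : Fin r, ∑ j : Fin r,
          if i < j then (A i j) ^ 2 + (B i j) ^ 2 else 0)
      ≥ 2 * (r : ℝ) * Real.sqrt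
          (∑ i : Fin r, ∑ j : Fin r, if i < j then
            (∑ k : Fin r, (A j k * B i k - A i k * B j k)) ^ 2 else 0))
    ∧ 2 * (r : ℝ) * Real.sqrt
        (∑ i : Fin r, ∑ j : Fin r, if i < j then
          (∑ k : Fin r, (A j k * B i k - A i k * B j k)) ^ 2 else 0)
      = (r : ℝ) * Real.sqrt 2 *
          Real.sqrt (∑ i : Fin r, ∑ j : Fin r, ((A * B - B * A) i j) ^ 2) := by
  have hr0 : 0 < r := lt_of_lt_of_le (by norm_num) hr
  set C : Matrix (Fin r) (Fin r) ℝ := A * B - B * A with hC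
  -- the inner sums are entries of -C
  have hCentry : ∀ i j : Fin r,
      (∑ k : Fin r, (A j k * B i k - A i k * B j k)) = -(C i j) := by
    intro i j
    rw [hC, Matrix.sub_apply, Matrix.mul_apply, Matrix.mul_apply, neg_sub,
      ← Finset.sum_sub_distrib]
    apply Finset.sum_congr rfl; intro k _
    rw [hA.apply j k, hB.apply j k]
    ring
  have hskew : ∀ i j : Fin r, C j i = -(C i j) := by
    intro i j
    rw [hC]
    simp only [Matrix.sub_apply, Matrix.mul_apply]
    rw [← Finset.sum_sub_distrib, ← Finset.sum_sub_distrib, ← Finset.sum_neg_distrib]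
    apply Finset.sum_congr rfl; intro k _
    rw [hA.apply k i, hB.apply k j, hA.apply k j, hB.apply k i]
    ring
  set Sc : ℝ := ∑ i : Fin r, ∑ j : Fin r, if i < j then
      (∑ k : Fin r, (A j k * B i k - A i k * B j k)) ^ 2 else 0 with hSc
  have hScC : Sc = ∑ i, ∑ j, if i < j then (C i j)^2 else 0 := by
    rw [hSc]
    apply Finset.sum_congr rfl; intro i _; apply Finset.sum_congr rfl; intro j _
    split_ifs
    · rw [hCentry]; ring
    · rfl
  have h2S : ∑ i, ∑ j, (C i j)^2 = 2 * Sc := by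
    rw [hScC]
    exact offdiag_double (fun i j => (C i j)^2)
      (fun i j => by beta_reduce; rw [hskew j i]; ring)
      (fun i => by beta_reduce; nlinarith [hskew i i])
  have hSc0 : 0 ≤ Sc := by
    rw [hScC]
    apply Finset.sum_nonneg; intro i _; apply Finset.sum_nonneg; intro j _
    split_ifs
    · positivity
    · exact le_refl 0
  constructor
  · -- the inequality
    set TA : ℝ := (∑ i, A i i)/(r:ℝ) with hTA
    set TB : ℝ := (∑ i, B i i)/(r:ℝ) with hTB
    set A0 : Matrix (Fin r) (Fin r) ℝ := A - TA • 1 with hA0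
    set B0 : Matrix (Fin r) (Fin r) ℝ := B - TB • 1 with hB0
    have hA0s : A0.IsSymm := by
      rw [Matrix.IsSymm, hA0, Matrix.transpose_sub, Matrix.transpose_smul,
        Matrix.transpose_one, hA]
    have hCeq : C = A0 * B0 - B0 * A0 := by
      rw [hC, hA0, hB0]
      simp only [Matrix.sub_mul, Matrix.mul_sub, Matrix.smul_mul, Matrix.mul_smul,
        Matrix.one_mul, Matrix.mul_one, smul_smul, smul_sub, smul_add, mul_comm TB TA]
      abel
    set QA : ℝ := ∑ i, ∑ j, (A0 i j)^2 with hQA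
    set QB : ℝ := ∑ i, ∑ j, (B0 i j)^2 with hQB
    have hQA0 : 0 ≤ QA := by
      rw [hQA]; exact Finset.sum_nonneg fun i _ => Finset.sum_nonneg fun j _ => sq_nonneg _
    have hQB0 : 0 ≤ QB := by
      rw [hQB]; exact Finset.sum_nonneg fun i _ => Finset.sum_nonneg fun j _ => sq_nonneg _
    have hbw : 2 * Sc ≤ 2 * QA * QB := by
      rw [← h2S, hCeq]
      exact bw A0 B0 hA0s
    have hqa := Qsum hr0 A hA
    have hqb := Qsum hr0 B hB
    have hLHS : (∑ i : Fin r, ∑ j : Fin r, if i < j then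
        (A i i - A j j) ^ 2 + (B i i - B j j) ^ 2 else 0)
      + 2 * (r : ℝ) * (∑ i : Fin r, ∑ j : Fin r,
          if i < j then (A i j) ^ 2 + (B i j) ^ 2 else 0)
        = (r:ℝ) * QA + (r:ℝ) * QB := by
      have split1 : (∑ i : Fin r, ∑ j : Fin r, if i < j then
          (A i i - A j j) ^ 2 + (B i i - B j j) ^ 2 else 0)
        = (∑ i : Fin r, ∑ j : Fin r, if i < j then (A i i - A j j) ^ 2 else 0)
          + (∑ i : Fin r, ∑ j : Fin r, if i < j then (B i i - B j j) ^ 2 else 0) := by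
        rw [← Finset.sum_add_distrib]
        apply Finset.sum_congr rfl; intro i _
        rw [← Finset.sum_add_distrib]
        apply Finset.sum_congr rfl; intro j _
        split_ifs <;> simp
      have split2 : (∑ i : Fin r, ∑ j : Fin r,
          if i < j then (A i j) ^ 2 + (B i j) ^ 2 else 0)
        = (∑ i : Fin r, ∑ j : Fin r, if i < j then (A i j) ^ 2 else 0)
          + (∑ i : Fin r, ∑ j : Fin r, if i < j then (B i j) ^ 2 else 0) := by
        rw [← Finset.sum_add_distrib]
        apply Finset.sum_congr rfl; intro i _
        rw [← Finset.sum_add_distrib]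
        apply Finset.sum_congr rfl; intro j _
        split_ifs <;> simp
      rw [split1, split2]
      rw [← hTA] at hqa; rw [← hA0] at hqa; rw [← hQA] at hqa
      rw [← hTB] at hqb; rw [← hB0] at hqb; rw [← hQB] at hqb
      linarith [hqa, hqb]
    rw [ge_iff_le, hLHS]
    have hsq : Real.sqrt Sc ≤ (QA + QB)/2 := by
      have h1 : Sc ≤ ((QA + QB)/2)^2 := by nlinarith [hbw, sq_nonneg (QA - QB)]
      calc Real.sqrt Sc ≤ Real.sqrt (((QA + QB)/2)^2) := Real.sqrt_le_sqrt h1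
        _ = (QA + QB)/2 := Real.sqrt_sq (by linarith)
    have h2 : 2*(r:ℝ)*Real.sqrt Sc ≤ 2*(r:ℝ)*((QA+QB)/2) :=
      mul_le_mul_of_nonneg_left hsq (by have := Nat.cast_nonneg (α := ℝ) r; linarith)
    linarith
  · -- the equality
    have hfrob : (∑ i : Fin r, ∑ j : Fin r, ((A * B - B * A) i j) ^ 2) = 2 * Sc := by
      rw [← hC]; exact h2S
    rw [hfrob, Real.sqrt_mul (by norm_num : (0:ℝ) ≤ 2) Sc]
    rw [← mul_assoc, mul_assoc ((r:ℝ)) (Real.sqrt 2) (Real.sqrt 2),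
      Real.mul_self_sqrt (by norm_num : (0:ℝ) ≤ 2)]
    ring
end
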